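/- arXiv:2212.11637 — 2 statements merged into one kernel-verified Lean document; each statement's English description precedes it below -/
import Mathlib

section
/- Let S : ℕ → ℕ satisfy S(n) ≤ c·s(n)·log s(n) + m for all n, where c, m are positive constants and s(n) ≥ 3 for all n. Set d = max(m, log₃ c) and k(n) = ⌈log₃ s(n)⌉ − 2 + ⌈d⌉. Then for all n, the capacity 3^(2+k(n))·(2+k(n)) is at least S(n). -/
/-- If `S n ≤ c·s(n)·log₃ s(n) + m` with `c, m > 0` and `s(n) ≥ 3`, then with
`d = max(m, log₃ c)` and `k(n) = ⌈log₃ s(n)⌉ − 2 + ⌈d⌉`, the capacity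
`3^(2+k(n))·(2+k(n))` is at least `S n` for all `n`. -/
theorem stmt6 (S s : ℕ → ℕ) (c m : ℝ) (hc : 0 < c) (hm : 0 < m)
    (hs : ∀ n, 3 ≤ s n)
    (hS : ∀ n, (S n : ℝ) ≤ c * s n * Real.logb 3 (s n) + m) :
    ∀ n, (S n : ℝ) ≤
      3 ^ (2 + (⌈Real.logb 3 (s n)⌉₊ - 2 + ⌈max m (Real.logb 3 c)⌉₊)) *
        (2 + (⌈Real.logb 3 (s n)⌉₊ - 2 + ⌈max m (Real.logb 3 c)⌉₊)) := by
  intro n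
  set L := ⌈Real.logb 3 (s n)⌉₊ with hLdef
  set D := ⌈max m (Real.logb 3 c)⌉₊ with hDdef
  have hs3 : (3:ℝ) ≤ (s n : ℝ) := by exact_mod_cast hs n
  have hspos : (0:ℝ) < (s n : ℝ) := by linarith
  have hlog1 : 1 ≤ Real.logb 3 (s n) := by
    have : Real.logb 3 3 ≤ Real.logb 3 (s n) :=
      Real.logb_le_logb_of_le (by norm_num) (by norm_num) hs3
    simpa using this
  have hlogL : Real.logb 3 (s n) ≤ (L : ℝ) := Nat.le_ceil _
  have hL1 : 1 ≤ L := by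
    rw [hLdef]; exact Nat.one_le_ceil_iff.mpr (by linarith)
  have hsL : (s n : ℝ) ≤ (3:ℝ) ^ L := by
    have h1 : (s n : ℝ) = (3:ℝ) ^ Real.logb 3 (s n) :=
      (Real.rpow_logb (by norm_num) (by norm_num) hspos).symm
    rw [h1]
    calc (3:ℝ) ^ Real.logb 3 (s n) ≤ (3:ℝ) ^ (L : ℝ) :=
        Real.rpow_le_rpow_of_exponent_le (by norm_num) hlogL
      _ = (3:ℝ) ^ L := by rw [Real.rpow_natCast]
  have hmD : m ≤ (D : ℝ) := le_trans (le_max_left _ _) (Nat.le_ceil _)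
  have hcD : c ≤ (3:ℝ) ^ D := by
    have h1 : c = (3:ℝ) ^ Real.logb 3 c :=
      (Real.rpow_logb (by norm_num) (by norm_num) hc).symm
    have hlc : Real.logb 3 c ≤ (D : ℝ) :=
      le_trans (le_max_right m _) (Nat.le_ceil _)
    rw [h1]
    calc (3:ℝ) ^ Real.logb 3 c ≤ (3:ℝ) ^ (D : ℝ) :=
        Real.rpow_le_rpow_of_exponent_le (by norm_num) hlc
      _ = (3:ℝ) ^ D := by rw [Real.rpow_natCast]
  have hmain : (S n : ℝ) ≤ (3:ℝ) ^ (L + D) * ((L : ℝ) + D) := by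
    have h1 : c * (s n : ℝ) * Real.logb 3 (s n) ≤
        (3:ℝ) ^ D * ((3:ℝ) ^ L) * (L : ℝ) := by
      gcongr
    have h2 : (3:ℝ) ^ (L + D) = (3:ℝ) ^ D * (3:ℝ) ^ L := by
      rw [pow_add]; ring
    have h3 : (1:ℝ) ≤ (3:ℝ) ^ (L + D) := one_le_pow₀ (by norm_num)
    calc (S n : ℝ) ≤ c * (s n : ℝ) * Real.logb 3 (s n) + m := hS n
      _ ≤ (3:ℝ) ^ D * ((3:ℝ) ^ L) * (L : ℝ) + (D : ℝ) := by linarith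
      _ = (3:ℝ) ^ (L + D) * (L : ℝ) + (D : ℝ) := by rw [h2]
      _ ≤ (3:ℝ) ^ (L + D) * (L : ℝ) + (3:ℝ) ^ (L + D) * (D : ℝ) := by
          nlinarith [Nat.cast_nonneg (α := ℝ) D]
      _ = (3:ℝ) ^ (L + D) * ((L : ℝ) + D) := by ring
  have hexp : (3:ℝ) ^ (L + D) ≤ (3:ℝ) ^ (2 + (L - 2 + D)) :=
    pow_le_pow_right₀ (by norm_num) (by omega)
  calc (S n : ℝ) ≤ (3:ℝ) ^ (L + D) * ((L : ℝ) + D) := hmain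
    _ ≤ (3:ℝ) ^ (2 + (L - 2 + D)) * ((L : ℝ) + D) := by
        refine mul_le_mul_of_nonneg_right hexp (by positivity)
    _ = 3 ^ (2 + (L - 2 + D)) * (2 + ((L : ℝ) - 2 + D)) := by ring
end

section
/- In a finite directed graph where every node has outdegree at most d, for any fixed pattern graph L whose every node is reachable from one of at most r root nodes via a directed path, the number of injective root-preserving matches of L into the host graph is at most R·d^{|E_L|}·(|E_L|+1)!-bounded independent of host size; in particular it is bounded by a constant depending only on L, d, and the number R of roots in the host graph. -/
/-- A finite directed multigraph with node and edge labels and distinguished roots. -/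
structure DiGraph where
  V : Type
  E : Type
  [instV : Fintype V]
  [instE : Fintype E]
  src : E → V
  tgt : E → V
  vlab : V → ℕ
  elabel : E → ℕ
  isRoot : V → Prop

attribute [instance] DiGraph.instV DiGraph.instE

/-- An injective graph morphism preserving sources, targets, labels, and preserving and
reflecting roots (a match of the left-hand side `L` in the host graph `G`). -/
structure Match (L G : DiGraph) where
  onV : L.V → G.V
  onE : L.E → G.E
  src_comm : ∀ e, G.src (onE e) = onV (L.src e)
  tgt_comm : ∀ e, G.tgt (onE e) = onV (L.tgt e)
  vlab_comm : ∀ v, G.vlab (onV v) = L.vlab v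
  elab_comm : ∀ e, G.elabel (onE e) = L.elabel e
  root_pres : ∀ v, L.isRoot v → G.isRoot (onV v)
  root_refl : ∀ v, G.isRoot (onV v) → L.isRoot v
  injV : Function.Injective onV
  injE : Function.Injective onE

/-- Reachability by directed paths. -/
def DiGraph.Reachable (L : DiGraph) (u v : L.V) : Prop :=
  Relation.ReflTransGen (fun a b => ∃ e, L.src e = a ∧ L.tgt e = b) u v

/-- If the host graph `G` has at most `R` roots and outdegree at most `d`, and every node
of the fixed pattern `L` is reachable from a root of `L` by a directed path, then the number
of injective root-preserving and root-reflecting matches of `L` in `G` is at most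
`R^r · d^{|E_L|}` where `r` is the number of roots of `L` — a bound independent of the size
of `G`. -/
theorem stmt13 (L G : DiGraph) (d R : ℕ)
    [DecidablePred L.isRoot] [DecidablePred G.isRoot] [DecidableEq G.V]
    (hout : ∀ v : G.V, (Finset.univ.filter fun e => G.src e = v).card ≤ d)
    (hroots : (Finset.univ.filter fun v : G.V => G.isRoot v).card ≤ R)
    (hfast : ∀ v : L.V, ∃ p : L.V, L.isRoot p ∧ L.Reachable p v) :
    Nat.card (Match L G) ≤
      R ^ (Finset.univ.filter fun v : L.V => L.isRoot v).card * d ^ Fintype.card L.E := by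
  classical
  -- an injective enumeration of edges
  set g : G.E → ℕ := fun e => (Fintype.equivFin G.E e : ℕ) with hgdef
  have hg : Function.Injective g := fun a b h => by
    have := Fin.val_injective h
    exact (Fintype.equivFin G.E).injective this
  -- rank of an edge among edges with the same source
  set idx : G.E → ℕ :=
    fun e => (Finset.univ.filter fun e' => G.src e' = G.src e ∧ g e' < g e).card with hidxdef
  have hidx_lt : ∀ e, idx e < d := by
    intro e
    have hsub : (Finset.univ.filter fun e' => G.src e' = G.src e ∧ g e' < g e) ⊆
        (Finset.univ.filter fun e' => G.src e' = G.src e).erase e := by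
      intro x hx
      simp only [Finset.mem_filter, Finset.mem_univ, true_and] at hx
      refine Finset.mem_erase.2 ⟨?_, ?_⟩
      · rintro rfl; exact lt_irrefl _ hx.2
      · simp [Finset.mem_filter, hx.1]
    have hmem : e ∈ (Finset.univ.filter fun e' => G.src e' = G.src e) := by simp
    have hpos : 0 < (Finset.univ.filter fun e' => G.src e' = G.src e).card :=
      Finset.card_pos.2 ⟨e, hmem⟩
    have h1 : idx e ≤ (Finset.univ.filter fun e' => G.src e' = G.src e).card - 1 := by
      calc idx e ≤ ((Finset.univ.filter fun e' => G.src e' = G.src e).erase e).card :=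
            Finset.card_le_card hsub
        _ = (Finset.univ.filter fun e' => G.src e' = G.src e).card - 1 :=
            Finset.card_erase_of_mem hmem
    have h2 : (Finset.univ.filter fun e' => G.src e' = G.src e).card ≤ d := hout _
    omega
  have hidx_inj : ∀ e1 e2 : G.E, G.src e1 = G.src e2 → idx e1 = idx e2 → e1 = e2 := by
    intro e1 e2 hs hi
    by_contra hne
    have hgne : g e1 ≠ g e2 := fun h => hne (hg h)
    -- WLOG-style local lemma
    have key : ∀ a b : G.E, G.src a = G.src b → g a < g b → idx a < idx b := by
      intro a b hsab hab
      have hss : (Finset.univ.filter fun e' => G.src e' = G.src a ∧ g e' < g a) ⊂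
          (Finset.univ.filter fun e' => G.src e' = G.src b ∧ g e' < g b) := by
        constructor
        · intro x hx
          simp only [Finset.mem_filter, Finset.mem_univ, true_and] at hx ⊢
          exact ⟨hx.1.trans hsab, hx.2.trans hab⟩
        · intro hsubs
          have ha : a ∈ (Finset.univ.filter fun e' => G.src e' = G.src b ∧ g e' < g b) := by
            simp [hsab, hab]
          have ha' := hsubs ha
          simp only [Finset.mem_filter, Finset.mem_univ, true_and] at ha'
          exact lt_irrefl _ ha'
      exact Finset.card_lt_card hss
    rcases lt_or_gt_of_ne hgne with h | h
    · exact absurd hi (Nat.ne_of_lt (key _ _ hs h))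
    · exact absurd hi.symm (Nat.ne_of_lt (key _ _ hs.symm h))
  -- the encoding
  set Φ : Match L G → ({v : L.V // L.isRoot v} → {w : G.V // G.isRoot w}) × (L.E → Fin d) :=
    fun m => (fun v => ⟨m.onV v.1, m.root_pres v.1 v.2⟩,
              fun e => ⟨idx (m.onE e), hidx_lt _⟩) with hΦdef
  have hΦ : Function.Injective Φ := by
    intro m1 m2 h
    have h1 : ∀ v : L.V, L.isRoot v → m1.onV v = m2.onV v := by
      intro v hv
      have := congrFun (congrArg Prod.fst h) ⟨v, hv⟩
      simpa [hΦdef] using congrArg Subtype.val this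
    have h2 : ∀ e : L.E, idx (m1.onE e) = idx (m2.onE e) := by
      intro e
      have := congrFun (congrArg Prod.snd h) e
      simpa [hΦdef] using congrArg Fin.val this
    have hV : ∀ v : L.V, m1.onV v = m2.onV v := by
      intro v
      obtain ⟨p, hp, hreach⟩ := hfast v
      have hbase : m1.onV p = m2.onV p := h1 p hp
      induction hreach with
      | refl => exact hbase
      | tail _ hbc ih =>
        obtain ⟨e, he1, he2⟩ := hbc
        have hsrc : G.src (m1.onE e) = G.src (m2.onE e) := by
          rw [m1.src_comm, m2.src_comm, he1, ih]
        have heq : m1.onE e = m2.onE e := hidx_inj _ _ hsrc (h2 e)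
        calc m1.onV _ = G.tgt (m1.onE e) := by rw [m1.tgt_comm, he2]
          _ = G.tgt (m2.onE e) := by rw [heq]
          _ = m2.onV _ := by rw [m2.tgt_comm, he2]
    have hE : ∀ e : L.E, m1.onE e = m2.onE e := by
      intro e
      refine hidx_inj _ _ ?_ (h2 e)
      rw [m1.src_comm, m2.src_comm, hV]
    have hV' : m1.onV = m2.onV := funext hV
    have hE' : m1.onE = m2.onE := funext hE
    cases m1; cases m2
    simp only at hV' hE'
    subst hV'; subst hE'
    rfl
  have hcard := Nat.card_le_card_of_injective Φ hΦ
  have hcodom : Nat.card (({v : L.V // L.isRoot v} → {w : G.V // G.isRoot w}) × (L.E → Fin d)) =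
      (Finset.univ.filter fun v : G.V => G.isRoot v).card ^
        (Finset.univ.filter fun v : L.V => L.isRoot v).card * d ^ Fintype.card L.E := by
    rw [Nat.card_eq_fintype_card, Fintype.card_prod, Fintype.card_fun, Fintype.card_fun,
      Fintype.card_fin, Fintype.card_subtype, Fintype.card_subtype]
  rw [hcodom] at hcard
  exact hcard.trans (Nat.mul_le_mul_right _ (Nat.pow_le_pow_left hroots _))
end
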